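/- Let A be a skew left brace of finite weight such that the lattice of ideals of A contained in A⁽²⁾ satisfies the descending chain condition. Then ω(A) = ω(A/A⁽²⁾). -/

import Mathlib

/-- A skew left brace: `(A,+)` and `(A,∘)` (written `*`) are groups with
`a ∘ (b + c) = a ∘ b - a + a ∘ c`. -/
class SkewBrace (A : Type*) extends AddGroup A, Group A where
  compat : ∀ a b c : A, a * (b + c) = a * b + (-a + a * c)

namespace SkewBrace

variable {A : Type*}

/-- `λ_a (b) = -a + a ∘ b`. -/
def lam [SkewBrace A] (a b : A) : A := -a + a * b

/-- `a * b = λ_a(b) - b = -a + a∘b - b` (the brace star operation). -/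
def star [SkewBrace A] (a b : A) : A := -a + a * b - b

/-- An ideal of a skew left brace: a subgroup of `(A,+)`, normal in `(A,+)` and
`(A,∘)`, and invariant under all `λ_a`. -/
structure Ideal (A : Type*) [SkewBrace A] where
  carrier : Set A
  zero_mem : (0 : A) ∈ carrier
  add_mem : ∀ ⦃a b : A⦄, a ∈ carrier → b ∈ carrier → a + b ∈ carrier
  neg_mem : ∀ ⦃a : A⦄, a ∈ carrier → -a ∈ carrier
  add_conj_mem : ∀ (a : A) ⦃b : A⦄, b ∈ carrier → a + b + -a ∈ carrier
  mul_conj_mem : ∀ (a : A) ⦃b : A⦄, b ∈ carrier → a * b * a⁻¹ ∈ carrier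
  lam_mem : ∀ (a : A) ⦃b : A⦄, b ∈ carrier → lam a b ∈ carrier

/-- The ideal generated by a set, as a set. -/
def genIdeal [SkewBrace A] (S : Set A) : Set A :=
  {x | ∀ I : Ideal A, S ⊆ I.carrier → x ∈ I.carrier}

/-- A maximal ideal: a proper ideal such that the only ideals containing it are
itself and the whole brace. -/
def Ideal.IsMaximal [SkewBrace A] (M : Ideal A) : Prop :=
  M.carrier ≠ Set.univ ∧
    ∀ J : Ideal A, M.carrier ⊆ J.carrier → J.carrier = M.carrier ∨ J.carrier = Set.univ

/-- The radical: the intersection of all maximal ideals (the whole brace if there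
are none). -/
def radical (A : Type*) [SkewBrace A] : Set A :=
  {x | ∀ M : Ideal A, M.IsMaximal → x ∈ M.carrier}

/-- The set of all elements `a * b` (star). -/
def starSet (A : Type*) [SkewBrace A] : Set A := {x | ∃ a b : A, star a b = x}

/-- `A⁽²⁾` as the ideal generated by all `a * b`. -/
def sq (A : Type*) [SkewBrace A] : Set A := genIdeal (starSet A)

/-- `A⁽²⁾` as the additive subgroup generated by all `a * b`. -/
def sqAdd (A : Type*) [SkewBrace A] : Set A := (AddSubgroup.closure (starSet A) : Set A)

open scoped Classical in
/-- The weight of a skew left brace: the minimal number of elements generating it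
as an ideal (with `ω(0) = 1` by convention). -/
noncomputable def weight (A : Type*) [SkewBrace A] : ℕ∞ :=
  if Subsingleton A then 1
  else ⨅ (S : Finset A) (_ : genIdeal (S : Set A) = Set.univ), (S.card : ℕ∞)

/-- Artinian: every descending chain of ideals is eventually stationary. -/
def IsArtinian (A : Type*) [SkewBrace A] : Prop :=
  ∀ f : ℕ → Ideal A, (∀ n, (f (n + 1)).carrier ⊆ (f n).carrier) →
    ∃ N, ∀ n, N ≤ n → (f n).carrier = (f N).carrier

/-- A homomorphism of skew left braces. -/
structure BraceHom (A B : Type*) [SkewBrace A] [SkewBrace B] where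
  toFun : A → B
  map_add' : ∀ x y, toFun (x + y) = toFun x + toFun y
  map_mul' : ∀ x y, toFun (x * y) = toFun x * toFun y

/-- The kernel of a brace homomorphism. -/
def BraceHom.ker {A B : Type*} [SkewBrace A] [SkewBrace B] (f : BraceHom A B) : Set A :=
  {a | f.toFun a = 0}

/-- The socle `Soc(A) = Ker λ ∩ Z(A,+)`. -/
def Soc (A : Type*) [SkewBrace A] : Set A :=
  {a | (∀ b : A, lam a b = b) ∧ ∀ b : A, a + b = b + a}

/-- The annihilator `Ann(A) = Soc(A) ∩ Z(A,∘)`. -/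
def ann (A : Type*) [SkewBrace A] : Set A :=
  {a | (∀ b : A, lam a b = b) ∧ (∀ b : A, a + b = b + a) ∧ (∀ b : A, a * b = b * a)}

/-- A simple skew left brace: it has exactly two ideals, `0` and itself. -/
def IsSimple (A : Type*) [SkewBrace A] : Prop :=
  (∃ x y : A, x ≠ y) ∧ ∀ I : Ideal A, I.carrier = {(0 : A)} ∨ I.carrier = Set.univ

/-- A prime ideal `P`: the quotient `A/P` is a prime brace; internally, for all
ideals `I, J ⊇ P` with `I * J ⊆ P`, one of `I, J` equals `P`. -/
def Ideal.IsPrime [SkewBrace A] (P : Ideal A) : Prop :=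
  ∀ I J : Ideal A, P.carrier ⊆ I.carrier → P.carrier ⊆ J.carrier →
    (∀ i ∈ I.carrier, ∀ j ∈ J.carrier, star i j ∈ P.carrier) →
    I.carrier ⊆ P.carrier ∨ J.carrier ⊆ P.carrier

end SkewBrace

namespace SkewBrace

variable {A : Type*} [SkewBrace A]

theorem mul_zero' (a : A) : a * (0 : A) = a := by
  have h := SkewBrace.compat a 0 0
  rw [add_zero] at h
  have : (0 : A) = -a + a * 0 := by
    have := h.symm
    calc (0:A) = -(a*0) + (a*0) := by rw [neg_add_cancel]
    _ = -(a*0) + (a * 0 + (-a + a * 0)) := by rw [← h]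
    _ = -a + a * 0 := by rw [← add_assoc, neg_add_cancel, zero_add]
  calc a * 0 = a + (-a + a * 0) := by rw [← add_assoc, add_neg_cancel, zero_add]
  _ = a + 0 := by rw [← this]
  _ = a := add_zero a

theorem one_eq_zero' : (1 : A) = 0 := by
  have := mul_zero' (1 : A)
  rw [one_mul] at this
  exact this.symm

theorem lam_add (a b c : A) : lam a (b + c) = lam a b + lam a c := by
  unfold lam
  rw [SkewBrace.compat]
  simp only [add_assoc]

theorem lam_zero (a : A) : lam a 0 = 0 := by
  unfold lam; rw [mul_zero', neg_add_cancel]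

theorem lam_neg (a b : A) : lam a (-b) = -(lam a b) := by
  have h := lam_add a b (-b)
  rw [add_neg_cancel, lam_zero] at h
  exact (neg_eq_of_add_eq_zero_right h.symm).symm

theorem mul_neg' (a b : A) : a * (-b) = a + (-(a*b) + a) := by
  have h := SkewBrace.compat a b (-b)
  rw [add_neg_cancel, mul_zero'] at h
  have h2 : -(a*b) + a = -a + a * (-b) := by
    have h3 := congrArg (fun x => -(a*b) + x) h
    simp only [neg_add_cancel_left] at h3
    exact h3
  rw [h2, add_neg_cancel_left]

theorem lam_lam (a b c : A) : lam a (lam b c) = lam (a * b) c := by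
  unfold lam
  rw [SkewBrace.compat a (-b) (b*c), mul_neg']
  simp only [add_assoc, neg_add_cancel_left, add_neg_cancel_left, mul_assoc]

theorem mul_eq_add_lam (a b : A) : a * b = a + lam a b := by
  unfold lam; rw [← add_assoc, add_neg_cancel, zero_add]

theorem star_eq (a b : A) : star a b = lam a b - b := rfl

end SkewBrace
namespace SkewBrace

variable {A : Type*} [SkewBrace A]

theorem lam_one (b : A) : lam (1 : A) b = b := by
  unfold lam
  rw [one_mul, one_eq_zero', neg_zero, zero_add]

theorem lam_inv_lam (a b : A) : lam a (lam a⁻¹ b) = b := by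
  rw [lam_lam, mul_inv_cancel, lam_one]

namespace Ideal

variable (I : Ideal A)

theorem sub_mem {a b : A} (ha : a ∈ I.carrier) (hb : b ∈ I.carrier) :
    a - b ∈ I.carrier := by
  rw [sub_eq_add_neg]; exact I.add_mem ha (I.neg_mem hb)

theorem mul_mem {a b : A} (ha : a ∈ I.carrier) (hb : b ∈ I.carrier) :
    a * b ∈ I.carrier := by
  rw [mul_eq_add_lam]; exact I.add_mem ha (I.lam_mem a hb)

theorem inv_mem {a : A} (ha : a ∈ I.carrier) : a⁻¹ ∈ I.carrier := by
  have h : a⁻¹ * a = a⁻¹ + lam a⁻¹ a := mul_eq_add_lam _ _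
  rw [inv_mul_cancel, one_eq_zero'] at h
  have : a⁻¹ = -(lam a⁻¹ a) := by
    have := congrArg (fun x => x + -(lam a⁻¹ a)) h
    simp only [zero_add, add_assoc, add_neg_cancel, add_zero] at this
    exact this.symm
  rw [this]
  exact I.neg_mem (I.lam_mem _ ha)

/-- `star i b ∈ I` for `i ∈ I`. -/
theorem star_mem_left {i : A} (b : A) (hi : i ∈ I.carrier) :
    star i b ∈ I.carrier := by
  have hconj : b⁻¹ * i * b ∈ I.carrier := by
    have := I.mul_conj_mem b⁻¹ hi
    rwa [inv_inv] at this
  have key : star i b = -i + (b + lam b (b⁻¹ * i * b) + -b) := by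
    unfold star
    have : i * b = b * (b⁻¹ * i * b) := by group
    rw [this, mul_eq_add_lam b]
    simp only [add_assoc, sub_eq_add_neg]
  rw [key]
  exact I.add_mem (I.neg_mem hi) (I.add_conj_mem b (I.lam_mem b hconj))

/-- `star a j ∈ I` for `j ∈ I`. -/
theorem star_mem_right (a : A) {j : A} (hj : j ∈ I.carrier) :
    star a j ∈ I.carrier := by
  rw [star_eq]
  exact I.sub_mem (I.lam_mem a hj) hj

theorem list_sum_mem {l : List A} (h : ∀ x ∈ l, x ∈ I.carrier) :
    l.sum ∈ I.carrier := by
  induction l with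
  | nil => simpa using I.zero_mem
  | cons x t ih =>
    rw [List.sum_cons]
    exact I.add_mem (h x (by simp)) (ih fun y hy => h y (by simp [hy]))

end Ideal

theorem subset_genIdeal {S : Set A} : S ⊆ genIdeal S :=
  fun x hx I hI => hI hx

theorem genIdeal_subset {S : Set A} {I : Ideal A} (h : S ⊆ I.carrier) :
    genIdeal S ⊆ I.carrier := fun _ hx => hx I h

/-- The ideal generated by a set, as an `Ideal`. -/
def genIdealIdeal (S : Set A) : Ideal A where
  carrier := genIdeal S
  zero_mem := fun I _ => I.zero_mem
  add_mem := fun a b ha hb I hI => I.add_mem (ha I hI) (hb I hI)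
  neg_mem := fun a ha I hI => I.neg_mem (ha I hI)
  add_conj_mem := fun a b hb I hI => I.add_conj_mem a (hb I hI)
  mul_conj_mem := fun a b hb I hI => I.mul_conj_mem a (hb I hI)
  lam_mem := fun a b hb I hI => I.lam_mem a (hb I hI)

/-- `A⁽²⁾` as an `Ideal`. -/
def sqIdeal (A : Type*) [SkewBrace A] : Ideal A := genIdealIdeal (starSet A)

theorem sqIdeal_carrier : (sqIdeal A).carrier = sq A := rfl

/-- The trivial ideal. -/
def botIdeal (A : Type*) [SkewBrace A] : Ideal A where
  carrier := {0}
  zero_mem := rfl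
  add_mem := by rintro a b rfl rfl; simp
  neg_mem := by rintro a rfl; simp
  add_conj_mem := by rintro a b rfl; simp
  mul_conj_mem := by
    rintro a b rfl
    show a * 0 * a⁻¹ ∈ ({0} : Set A)
    rw [← one_eq_zero', mul_one, mul_inv_cancel, one_eq_zero']
    rfl
  lam_mem := by
    rintro a b rfl
    show lam a 0 ∈ ({0} : Set A)
    rw [lam_zero]; rfl

theorem genIdeal_empty : genIdeal (∅ : Set A) = {0} := by
  apply Set.Subset.antisymm
  · exact genIdeal_subset (I := botIdeal A) (by simp)
  · rintro x rfl
    exact (genIdealIdeal (∅:Set A)).zero_mem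

end SkewBrace
namespace SkewBrace

variable {A : Type*} [SkewBrace A]

/-- Sum of two ideals. -/
def sumIdeal (X M : Ideal A) : Ideal A where
  carrier := {c | ∃ x ∈ X.carrier, ∃ m ∈ M.carrier, c = x + m}
  zero_mem := ⟨0, X.zero_mem, 0, M.zero_mem, by simp⟩
  add_mem := by
    rintro _ _ ⟨x, hx, m, hm, rfl⟩ ⟨x', hx', m', hm', rfl⟩
    refine ⟨x + (m + x' + -m), X.add_mem hx (X.add_conj_mem m hx'), m + m',
      M.add_mem hm hm', ?_⟩
    simp only [add_assoc, neg_add_cancel_left]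
  neg_mem := by
    rintro _ ⟨x, hx, m, hm, rfl⟩
    refine ⟨-m + -x + -(-m), X.add_conj_mem (-m) (X.neg_mem hx), -m, M.neg_mem hm, ?_⟩
    simp only [neg_neg, neg_add_rev, add_assoc, add_neg_cancel, add_zero]
  add_conj_mem := by
    rintro a _ ⟨x, hx, m, hm, rfl⟩
    refine ⟨a + x + -a, X.add_conj_mem a hx, a + m + -a, M.add_conj_mem a hm, ?_⟩
    simp only [add_assoc, neg_add_cancel_left]
  mul_conj_mem := by
    rintro a _ ⟨x, hx, m, hm, rfl⟩
    have hxm : x + m = x * lam x⁻¹ m := by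
      rw [mul_eq_add_lam, lam_inv_lam]
    refine ⟨a * x * a⁻¹, X.mul_conj_mem a hx,
      lam (a * x * a⁻¹) (a * lam x⁻¹ m * a⁻¹),
      (M.lam_mem _ (M.mul_conj_mem a (M.lam_mem _ hm))), ?_⟩
    · rw [hxm, show a * (x * lam x⁻¹ m) * a⁻¹ = (a * x * a⁻¹) * (a * lam x⁻¹ m * a⁻¹) by group,
        mul_eq_add_lam]
  lam_mem := by
    rintro a _ ⟨x, hx, m, hm, rfl⟩
    exact ⟨lam a x, X.lam_mem a hx, lam a m, M.lam_mem a hm, lam_add a x m⟩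

end SkewBrace
namespace SkewBrace

variable {A : Type*} [SkewBrace A]

/-- `sq A ∩ ⋂ (M ∈ F) M` as an ideal. -/
def interIdeal (F : Finset (Ideal A)) : Ideal A where
  carrier := {x | x ∈ sq A ∧ ∀ M ∈ F, x ∈ M.carrier}
  zero_mem := ⟨(sqIdeal A).zero_mem, fun M _ => M.zero_mem⟩
  add_mem := fun a b ha hb =>
    ⟨(sqIdeal A).add_mem ha.1 hb.1, fun M hM => M.add_mem (ha.2 M hM) (hb.2 M hM)⟩
  neg_mem := fun a ha => ⟨(sqIdeal A).neg_mem ha.1, fun M hM => M.neg_mem (ha.2 M hM)⟩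
  add_conj_mem := fun a b hb =>
    ⟨(sqIdeal A).add_conj_mem a hb.1, fun M hM => M.add_conj_mem a (hb.2 M hM)⟩
  mul_conj_mem := fun a b hb =>
    ⟨(sqIdeal A).mul_conj_mem a hb.1, fun M hM => M.mul_conj_mem a (hb.2 M hM)⟩
  lam_mem := fun a b hb =>
    ⟨(sqIdeal A).lam_mem a hb.1, fun M hM => M.lam_mem a (hb.2 M hM)⟩

theorem interIdeal_subset_sq (F : Finset (Ideal A)) : (interIdeal F).carrier ⊆ sq A :=
  fun _ hx => hx.1

variable {B : Type*} [SkewBrace B]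

namespace BraceHom

variable (f : BraceHom A B)

theorem map_zero : f.toFun 0 = 0 := by
  have h := f.map_add' 0 0
  rw [add_zero] at h
  have := congrArg (fun x => -(f.toFun 0) + x) h
  simpa using this.symm

theorem map_neg (a : A) : f.toFun (-a) = -(f.toFun a) := by
  have h := f.map_add' a (-a)
  rw [add_neg_cancel, f.map_zero] at h
  exact (neg_eq_of_add_eq_zero_right h.symm).symm

theorem map_one : f.toFun 1 = 1 := by
  rw [one_eq_zero', f.map_zero, one_eq_zero']

theorem map_inv (a : A) : f.toFun a⁻¹ = (f.toFun a)⁻¹ := by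
  have h := f.map_mul' a a⁻¹
  rw [mul_inv_cancel, f.map_one] at h
  exact eq_inv_of_mul_eq_one_right h.symm

theorem map_lam (a b : A) : f.toFun (lam a b) = lam (f.toFun a) (f.toFun b) := by
  unfold lam
  rw [f.map_add', f.map_neg, f.map_mul']

theorem map_star (a b : A) : f.toFun (star a b) = star (f.toFun a) (f.toFun b) := by
  unfold star
  rw [sub_eq_add_neg, f.map_add', f.map_add', f.map_neg, f.map_neg, f.map_mul',
    sub_eq_add_neg]

/-- Preimage of an ideal. -/
def comapIdeal (J : Ideal B) : Ideal A where
  carrier := f.toFun ⁻¹' J.carrier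
  zero_mem := by simp only [Set.mem_preimage, f.map_zero]; exact J.zero_mem
  add_mem := fun a b ha hb => by
    simp only [Set.mem_preimage, f.map_add'] at *
    exact J.add_mem ha hb
  neg_mem := fun a ha => by
    simp only [Set.mem_preimage, f.map_neg] at *
    exact J.neg_mem ha
  add_conj_mem := fun a b hb => by
    simp only [Set.mem_preimage, f.map_add', f.map_neg] at *
    exact J.add_conj_mem _ hb
  mul_conj_mem := fun a b hb => by
    simp only [Set.mem_preimage, f.map_mul', f.map_inv] at *
    exact J.mul_conj_mem _ hb
  lam_mem := fun a b hb => by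
    simp only [Set.mem_preimage, f.map_lam] at *
    exact J.lam_mem _ hb

/-- Image of an ideal under a surjective brace hom. -/
def mapIdeal (hf : Function.Surjective f.toFun) (I : Ideal A) : Ideal B where
  carrier := f.toFun '' I.carrier
  zero_mem := ⟨0, I.zero_mem, f.map_zero⟩
  add_mem := by
    rintro _ _ ⟨a, ha, rfl⟩ ⟨b, hb, rfl⟩
    exact ⟨a + b, I.add_mem ha hb, f.map_add' a b⟩
  neg_mem := by
    rintro _ ⟨a, ha, rfl⟩
    exact ⟨-a, I.neg_mem ha, f.map_neg a⟩
  add_conj_mem := by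
    rintro b _ ⟨i, hi, rfl⟩
    obtain ⟨a, rfl⟩ := hf b
    exact ⟨a + i + -a, I.add_conj_mem a hi, by rw [f.map_add', f.map_add', f.map_neg]⟩
  mul_conj_mem := by
    rintro b _ ⟨i, hi, rfl⟩
    obtain ⟨a, rfl⟩ := hf b
    exact ⟨a * i * a⁻¹, I.mul_conj_mem a hi, by rw [f.map_mul', f.map_mul', f.map_inv]⟩
  lam_mem := by
    rintro b _ ⟨i, hi, rfl⟩
    obtain ⟨a, rfl⟩ := hf b
    exact ⟨lam a i, I.lam_mem a hi, f.map_lam a i⟩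

end BraceHom

end SkewBrace
namespace SkewBrace

variable {A : Type*} [SkewBrace A]

theorem Ideal.carrier_inj {I J : Ideal A} (h : I.carrier = J.carrier) : I = J := by
  cases I; cases J; simpa using h

theorem exists_subset_maximal (G₀ : Finset A) (hG : genIdeal (G₀ : Set A) = Set.univ)
    (I : Ideal A) (hI : I.carrier ≠ Set.univ) :
    ∃ M : Ideal A, M.IsMaximal ∧ I.carrier ⊆ M.carrier := by
  classical
  set S : Set (Set A) := {s | (∃ J : Ideal A, J.carrier = s) ∧ s ≠ Set.univ ∧ I.carrier ⊆ s}
    with hSdef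
  have H : ∀ c ⊆ S, IsChain (· ⊆ ·) c → c.Nonempty → ∃ ub ∈ S, ∀ s ∈ c, s ⊆ ub := by
    intro c hcS hchain hne
    obtain ⟨s₀, hs₀⟩ := hne
    have hdir : ∀ s₁ ∈ c, ∀ s₂ ∈ c, s₁ ⊆ s₂ ∨ s₂ ⊆ s₁ := by
      intro s₁ h₁ s₂ h₂
      rcases eq_or_ne s₁ s₂ with rfl | hne'
      · exact Or.inl (subset_refl _)
      · exact hchain h₁ h₂ hne'
    have hId : ∀ s ∈ c, ∃ J : Ideal A, J.carrier = s := fun s hs => (hcS hs).1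
    have : Nonempty (Ideal A) := ⟨I⟩
    choose! Jof hJof using hId
    have hmem : ∀ s (hs : s ∈ c) x, x ∈ s ↔ x ∈ (Jof s).carrier := by
      intro s hs x; rw [hJof s hs]
    -- binary closure helper
    have two : ∀ x y : A, x ∈ ⋃₀ c → y ∈ ⋃₀ c →
        ∃ s, ∃ _ : s ∈ c, x ∈ (Jof s).carrier ∧ y ∈ (Jof s).carrier := by
      rintro x y ⟨s₁, h₁, hx⟩ ⟨s₂, h₂, hy⟩
      rcases hdir s₁ h₁ s₂ h₂ with h | h
      · exact ⟨s₂, h₂, (hmem s₂ h₂ x).1 (h hx), (hmem s₂ h₂ y).1 hy⟩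
      · exact ⟨s₁, h₁, (hmem s₁ h₁ x).1 hx, (hmem s₁ h₁ y).1 (h hy)⟩
    have one : ∀ x : A, x ∈ ⋃₀ c → ∃ s, ∃ _ : s ∈ c, x ∈ (Jof s).carrier := by
      rintro x ⟨s₁, h₁, hx⟩; exact ⟨s₁, h₁, (hmem s₁ h₁ x).1 hx⟩
    have back : ∀ s (_ : s ∈ c) x, x ∈ (Jof s).carrier → x ∈ ⋃₀ c := by
      intro s hs x hx; exact ⟨s, hs, (hmem s hs x).2 hx⟩
    have hUideal : ∃ J : Ideal A, J.carrier = ⋃₀ c := by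
      refine ⟨⟨⋃₀ c, ?_, ?_, ?_, ?_, ?_, ?_⟩, rfl⟩
      · exact ⟨s₀, hs₀, (hmem s₀ hs₀ 0).2 (Jof s₀).zero_mem⟩
      · intro a b ha hb
        obtain ⟨s, hs, hx, hy⟩ := two a b ha hb
        exact back s hs _ ((Jof s).add_mem hx hy)
      · intro a ha
        obtain ⟨s, hs, hx⟩ := one a ha
        exact back s hs _ ((Jof s).neg_mem hx)
      · intro a b hb
        obtain ⟨s, hs, hx⟩ := one b hb
        exact back s hs _ ((Jof s).add_conj_mem a hx)
      · intro a b hb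
        obtain ⟨s, hs, hx⟩ := one b hb
        exact back s hs _ ((Jof s).mul_conj_mem a hx)
      · intro a b hb
        obtain ⟨s, hs, hx⟩ := one b hb
        exact back s hs _ ((Jof s).lam_mem a hx)
    refine ⟨⋃₀ c, ⟨hUideal, ?_, ?_⟩, fun s hs => Set.subset_sUnion_of_mem hs⟩
    · -- proper
      intro hU
      have hGsub : (G₀ : Set A) ⊆ ⋃₀ c := by rw [hU]; exact Set.subset_univ _
      have : ∃ s, ∃ _ : s ∈ c, (G₀ : Set A) ⊆ s := by
        clear hG
        induction G₀ using Finset.induction_on with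
        | empty => exact ⟨s₀, hs₀, by simp⟩
        | @insert g T hgT ih =>
          obtain ⟨s, hs, hT⟩ := ih
            (fun x hx => hGsub (by simp only [Finset.coe_insert, Set.mem_insert_iff]; right; exact hx))
          obtain ⟨s', hs', hg⟩ : ∃ s', ∃ _ : s' ∈ c, g ∈ s' := by
            have := hGsub (by simp : g ∈ (insert g T : Finset A))
            obtain ⟨s', hs', hgs⟩ := this
            exact ⟨s', hs', hgs⟩
          rcases hdir s hs s' hs' with h | h
          · exact ⟨s', hs', by
              intro x hx
              rcases Finset.mem_coe.1 hx |> Finset.mem_insert.1 with rfl | hxT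
              · exact hg
              · exact h (hT hxT)⟩
          · exact ⟨s, hs, by
              intro x hx
              rcases Finset.mem_coe.1 hx |> Finset.mem_insert.1 with rfl | hxT
              · exact h hg
              · exact hT hxT⟩
      obtain ⟨s, hs, hGs⟩ := this
      have : genIdeal (G₀ : Set A) ⊆ s := by
        rw [← hJof s hs] at hGs ⊢
        exact genIdeal_subset hGs
      rw [hG] at this
      exact (hcS hs).2.1 (Set.eq_univ_of_univ_subset this)
    · exact (hcS hs₀).2.2.trans (Set.subset_sUnion_of_mem hs₀)
  obtain ⟨m, hIm, hmax⟩ := zorn_subset_nonempty S H I.carrier ⟨⟨I, rfl⟩, hI, subset_refl _⟩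
  obtain ⟨⟨M, hM⟩, hmne, hmI⟩ := hmax.prop
  refine ⟨M, ⟨by rwa [hM], ?_⟩, by rwa [← hM] at hIm⟩
  intro J hMJ
  by_cases hJ : J.carrier = Set.univ
  · exact Or.inr hJ
  · left
    have hJS : J.carrier ∈ S := ⟨⟨J, rfl⟩, hJ, hmI.trans (hM ▸ hMJ)⟩
    have := hmax.2 hJS (hM ▸ hMJ)
    exact Set.Subset.antisymm (hM ▸ this) hMJ

theorem exists_minimal_of_dcc
    (hdcc : ∀ f : ℕ → Ideal A, (∀ n, (f n).carrier ⊆ sq A) →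
      (∀ n, (f (n + 1)).carrier ⊆ (f n).carrier) →
      ∃ N, ∀ n, N ≤ n → (f n).carrier = (f N).carrier)
    (T : Set (Ideal A)) (hT : ∀ J ∈ T, J.carrier ⊆ sq A) (hne : T.Nonempty) :
    ∃ N ∈ T, ∀ J ∈ T, J.carrier ⊆ N.carrier → J.carrier = N.carrier := by
  by_contra hcon
  push_neg at hcon
  obtain ⟨I₀, hI₀⟩ := hne
  have step : ∀ p : {J : Ideal A // J ∈ T}, ∃ q : {J : Ideal A // J ∈ T},
      q.1.carrier ⊆ p.1.carrier ∧ q.1.carrier ≠ p.1.carrier := by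
    rintro ⟨J, hJ⟩
    obtain ⟨K, hK, h1, h2⟩ := hcon J hJ
    exact ⟨⟨K, hK⟩, h1, h2⟩
  choose g hg1 hg2 using step
  set F : ℕ → {J : Ideal A // J ∈ T} := fun n => g^[n] ⟨I₀, hI₀⟩ with hF
  have hFs : ∀ n, F (n+1) = g (F n) := fun n => Function.iterate_succ_apply' g n _
  obtain ⟨N, hN⟩ := hdcc (fun n => (F n).1) (fun n => hT _ (F n).2)
    (fun n => by
      have h2 := hg1 (F n)
      rw [← hFs n] at h2
      exact h2)
  have h1 : ((F (N+1) : Ideal A)).carrier = ((F N : Ideal A)).carrier :=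
    hN (N+1) (Nat.le_succ N)
  rw [hFs] at h1
  exact hg2 (F N) h1

theorem prime_of_maximal_not_sq {M : Ideal A} (hM : M.IsMaximal)
    (hsq : ¬ sq A ⊆ M.carrier) (X Y : Ideal A)
    (hXY : ∀ x ∈ X.carrier, ∀ y ∈ Y.carrier, star x y ∈ M.carrier) :
    X.carrier ⊆ M.carrier ∨ Y.carrier ⊆ M.carrier := by
  by_contra hcon
  push_neg at hcon
  obtain ⟨hX, hY⟩ := hcon
  have hsum : ∀ Z : Ideal A, ¬ Z.carrier ⊆ M.carrier →
      (sumIdeal Z M).carrier = Set.univ := by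
    intro Z hZ
    rcases hM.2 (sumIdeal Z M) (fun m hm => ⟨0, Z.zero_mem, m, hm, (zero_add m).symm⟩)
      with h | h
    · exfalso
      apply hZ
      intro z hz
      have : z ∈ (sumIdeal Z M).carrier := ⟨z, hz, 0, M.zero_mem, (add_zero z).symm⟩
      rwa [h] at this
    · exact h
  have hXM := hsum X hX
  have hYM := hsum Y hY
  apply hsq
  apply genIdeal_subset
  rintro _ ⟨a, b, rfl⟩
  obtain ⟨x, hx, m, hm, ha⟩ : a ∈ (sumIdeal X M).carrier := hXM ▸ Set.mem_univ a
  set m₂ := x + m + -x with hm₂def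
  have hm₂ : m₂ ∈ M.carrier := M.add_conj_mem x hm
  have ha2 : a = m₂ + x := by rw [ha, hm₂def]; simp [add_assoc]
  set x₂ := lam m₂⁻¹ x with hx₂def
  have hx₂ : x₂ ∈ X.carrier := X.lam_mem _ hx
  have ha3 : a = m₂ * x₂ := by rw [mul_eq_add_lam, hx₂def, lam_inv_lam, ha2]
  obtain ⟨y, hy, m', hm', hb⟩ : b ∈ (sumIdeal Y M).carrier := hYM ▸ Set.mem_univ b
  have hp : star x₂ y ∈ M.carrier := hXY _ hx₂ _ hy
  have hq : lam x₂ m' ∈ M.carrier := M.lam_mem _ hm'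
  have hu : lam x₂ b = star x₂ y + y + lam x₂ m' := by
    rw [hb, lam_add, star_eq, sub_add_cancel]
  have hr : star m₂ (lam x₂ b) ∈ M.carrier := M.star_mem_left _ hm₂
  have key : star a b =
      star m₂ (lam x₂ b) + (star x₂ y + (y + (lam x₂ m' + -m') + -y)) := by
    rw [star_eq, ha3, ← lam_lam]
    have h5 : lam m₂ (lam x₂ b) = star m₂ (lam x₂ b) + lam x₂ b := by
      rw [star_eq, sub_add_cancel]
    rw [h5, add_sub_assoc]
    have h6 : lam x₂ b - b = star x₂ y + (y + (lam x₂ m' + -m') + -y) := by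
      rw [hu]
      conv_lhs => rw [hb]
      simp only [sub_eq_add_neg, neg_add_rev, add_assoc]
    rw [h6]
  rw [key]
  exact M.add_mem hr (M.add_mem hp (M.add_conj_mem y (M.add_mem hq (M.neg_mem hm'))))

theorem inter_not_subset {M : Ideal A} (hM : M.IsMaximal) (hsq : ¬ sq A ⊆ M.carrier)
    (F : Finset (Ideal A)) (hF : ∀ I ∈ F, ¬ I.carrier ⊆ M.carrier) :
    ¬ (interIdeal F).carrier ⊆ M.carrier := by
  classical
  induction F using Finset.induction_on with
  | empty =>
    intro h
    exact hsq (fun x hx => h ⟨hx, by simp⟩)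
  | @insert I F hnotmem ih =>
    intro h
    have hstar : ∀ k ∈ (interIdeal F).carrier, ∀ i ∈ I.carrier,
        star k i ∈ M.carrier := by
      intro k hk i hi
      apply h
      refine ⟨(sqIdeal A).star_mem_left i hk.1, ?_⟩
      intro M' hM'
      rcases Finset.mem_insert.mp hM' with rfl | hM'F
      · exact M'.star_mem_right k hi
      · exact M'.star_mem_left i (hk.2 M' hM'F)
    rcases prime_of_maximal_not_sq hM hsq (interIdeal F) I hstar with h1 | h1
    · exact ih (fun I' hI' => hF I' (Finset.mem_insert_of_mem hI')) h1
    · exact hF I (Finset.mem_insert_self I F) h1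

theorem crt_spec {M : Ideal A} (hM : M.IsMaximal) (hsq : ¬ sq A ⊆ M.carrier)
    (F : Finset (Ideal A)) (hF : ∀ I ∈ F, Ideal.IsMaximal I) :
    ∃ x, x ∈ sq A ∧ (∀ M' ∈ F, M' ≠ M → x ∈ M'.carrier) ∧ x ∉ M.carrier := by
  classical
  have hsub : ∀ I ∈ F.erase M, ¬ I.carrier ⊆ M.carrier := by
    intro I hI hIM
    obtain ⟨hne, hImem⟩ := Finset.mem_erase.mp hI
    rcases (hF I hImem).2 M hIM with h | h
    · exact hne (Ideal.carrier_inj h.symm)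
    · exact hM.1 h
  obtain ⟨x, hx1, hx2⟩ := Set.not_subset.mp (inter_not_subset hM hsq (F.erase M) hsub)
  exact ⟨x, hx1.1, fun M' h1 h2 => hx1.2 M' (Finset.mem_erase.mpr ⟨h2, h1⟩), hx2⟩

theorem crtsum_not_mem {L : List (Ideal A)} (hnd : L.Nodup) {M : Ideal A} (hML : M ∈ L)
    (x : Ideal A → A) (hxM : x M ∉ M.carrier)
    (hother : ∀ M' ∈ L, M' ≠ M → x M' ∈ M.carrier) :
    (L.map x).sum ∉ M.carrier := by
  obtain ⟨s, t, rfl⟩ := List.append_of_mem hML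
  obtain ⟨hnds, hndMt, hdisj⟩ := List.nodup_append'.mp hnd
  have hMs : M ∉ s := fun h => hdisj h List.mem_cons_self
  have hMt : M ∉ t := (List.nodup_cons.mp hndMt).1
  have hS1 : (s.map x).sum ∈ M.carrier := by
    apply M.list_sum_mem
    intro z hz
    obtain ⟨M', hM', rfl⟩ := List.mem_map.mp hz
    exact hother M' (by simp [hM']) (fun h => hMs (h ▸ hM'))
  have hS2 : (t.map x).sum ∈ M.carrier := by
    apply M.list_sum_mem
    intro z hz
    obtain ⟨M', hM', rfl⟩ := List.mem_map.mp hz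
    exact hother M' (by simp [hM']) (fun h => hMt (h ▸ hM'))
  intro htot
  rw [List.map_append, List.sum_append, List.map_cons, List.sum_cons] at htot
  have : x M = -(s.map x).sum + ((s.map x).sum + (x M + (t.map x).sum)) + -(t.map x).sum := by
    simp only [← add_assoc, neg_add_cancel, zero_add]
    rw [add_assoc, add_neg_cancel, add_zero]
  rw [this] at hxM
  exact hxM (M.add_mem (M.add_mem (M.neg_mem hS1) htot) (M.neg_mem hS2))

theorem crtsum_mem {L : List (Ideal A)} {I : Ideal A} (x : Ideal A → A)
    (h : ∀ M' ∈ L, x M' ∈ I.carrier) : (L.map x).sum ∈ I.carrier := by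
  apply I.list_sum_mem
  intro z hz
  obtain ⟨M', hM', rfl⟩ := List.mem_map.mp hz
  exact h M' hM'

end SkewBrace
namespace SkewBrace

variable {A : Type*} [SkewBrace A]

theorem weight_subsingleton (h : Subsingleton A) : weight A = 1 := by
  unfold weight; rw [if_pos h]

theorem weight_eq_iInf (h : ¬Subsingleton A) :
    weight A = ⨅ (S : Finset A) (_ : genIdeal (S : Set A) = Set.univ), (S.card : ℕ∞) := by
  unfold weight; rw [if_neg h]

theorem weight_le_of_gen (h : ¬Subsingleton A) (S : Finset A)
    (hS : genIdeal (S : Set A) = Set.univ) : weight A ≤ (S.card : ℕ∞) := by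
  rw [weight_eq_iInf h]
  exact iInf₂_le S hS

theorem exists_gen_of_ne_top (h : ¬Subsingleton A) (hw : weight A ≠ ⊤) :
    ∃ S : Finset A, genIdeal (S : Set A) = Set.univ := by
  by_contra hno
  push_neg at hno
  apply hw
  rw [weight_eq_iInf h]
  rw [iInf_eq_top]
  intro S
  rw [iInf_eq_top]
  intro hS
  exact absurd hS (hno S)

theorem subsingleton_of_gen_empty (h : genIdeal (∅ : Set A) = Set.univ) :
    Subsingleton A := by
  rw [genIdeal_empty] at h
  refine ⟨fun a b => ?_⟩
  have ha : a ∈ ({0} : Set A) := h ▸ Set.mem_univ a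
  have hb : b ∈ ({0} : Set A) := h ▸ Set.mem_univ b
  rw [Set.mem_singleton_iff] at ha hb
  rw [ha, hb]

variable {B : Type*} [SkewBrace B]

theorem subsingleton_target {f : BraceHom A B} (hf : Function.Surjective f.toFun)
    (h : Subsingleton A) : Subsingleton B := by
  refine ⟨fun a b => ?_⟩
  obtain ⟨x, rfl⟩ := hf a
  obtain ⟨y, rfl⟩ := hf b
  rw [h.elim x y]

theorem gen_image {f : BraceHom A B} (hf : Function.Surjective f.toFun)
    {S : Set A} (hS : genIdeal S = Set.univ) :
    genIdeal (f.toFun '' S) = Set.univ := by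
  rw [Set.eq_univ_iff_forall]
  intro b J hJ
  have hS' : S ⊆ (f.comapIdeal J).carrier := fun x hx => hJ ⟨x, hx, rfl⟩
  have : genIdeal S ⊆ (f.comapIdeal J).carrier := genIdeal_subset hS'
  rw [hS] at this
  obtain ⟨a, rfl⟩ := hf b
  exact this (Set.mem_univ a)

/-- The finite set of maximal ideals not containing `sq A`. -/
theorem exists_F1
    (hdcc : ∀ f : ℕ → Ideal A, (∀ n, (f n).carrier ⊆ sq A) →
      (∀ n, (f (n + 1)).carrier ⊆ (f n).carrier) →
      ∃ N, ∀ n, N ≤ n → (f n).carrier = (f N).carrier) :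
    ∃ F₁ : Finset (Ideal A), (∀ M ∈ F₁, Ideal.IsMaximal M ∧ ¬ sq A ⊆ M.carrier) ∧
      ∀ M : Ideal A, M.IsMaximal → ¬ sq A ⊆ M.carrier → M ∈ F₁ := by
  classical
  set T : Set (Ideal A) :=
    {J | ∃ F : Finset (Ideal A), (∀ M ∈ F, Ideal.IsMaximal M ∧ ¬ sq A ⊆ M.carrier) ∧
      J = interIdeal F} with hTdef
  have hT : ∀ J ∈ T, J.carrier ⊆ sq A := by
    rintro J ⟨F, _, rfl⟩; exact interIdeal_subset_sq F
  have hne : T.Nonempty := ⟨interIdeal ∅, ∅, by simp, rfl⟩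
  obtain ⟨N, ⟨F₁, hF₁, rfl⟩, hmin⟩ := exists_minimal_of_dcc hdcc T hT hne
  refine ⟨F₁, hF₁, ?_⟩
  intro M hM hMsq
  by_contra hMF
  have hnsub : ¬ (interIdeal F₁).carrier ⊆ M.carrier := by
    apply inter_not_subset hM hMsq
    intro I hI hIM
    rcases (hF₁ I hI).1.2 M hIM with h | h
    · exact hMF (Ideal.carrier_inj h.symm ▸ hI)
    · exact hM.1 h
  have hJ'T : interIdeal (insert M F₁) ∈ T := by
    refine ⟨insert M F₁, ?_, rfl⟩
    intro M' hM'
    rcases Finset.mem_insert.mp hM' with rfl | h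
    · exact ⟨hM, hMsq⟩
    · exact hF₁ M' h
  have hsub : (interIdeal (insert M F₁)).carrier ⊆ (interIdeal F₁).carrier := by
    rintro x ⟨h1, h2⟩
    exact ⟨h1, fun M' hM' => h2 M' (Finset.mem_insert_of_mem hM')⟩
  have heq := hmin _ hJ'T hsub
  apply hnsub
  intro x hx
  have : x ∈ (interIdeal (insert M F₁)).carrier := by rw [heq]; exact hx
  exact this.2 M (Finset.mem_insert_self M F₁)

end SkewBrace
namespace SkewBrace

variable {A : Type*} [SkewBrace A] {B : Type*} [SkewBrace B]

theorem hard_case0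
    (G₀ : Finset A) (hG : genIdeal (G₀ : Set A) = Set.univ)
    (hdcc : ∀ f : ℕ → Ideal A, (∀ n, (f n).carrier ⊆ sq A) →
      (∀ n, (f (n + 1)).carrier ⊆ (f n).carrier) →
      ∃ N, ∀ n, N ≤ n → (f n).carrier = (f N).carrier)
    (hsquniv : sq A = Set.univ) :
    ∃ a : A, genIdeal ({a} : Set A) = Set.univ := by
  classical
  obtain ⟨F₁, hF₁, hF₁all⟩ := exists_F1 hdcc
  have hnA : Nonempty A := ⟨0⟩
  have hxex : ∀ M ∈ F₁, ∃ x, x ∈ sq A ∧ (∀ M' ∈ F₁, M' ≠ M → x ∈ M'.carrier) ∧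
      x ∉ M.carrier :=
    fun M hM => crt_spec (hF₁ M hM).1 (hF₁ M hM).2 F₁ (fun I hI => (hF₁ I hI).1)
  choose! xf hx1 hx2 hx3 using hxex
  set a : A := (F₁.toList.map xf).sum with ha
  refine ⟨a, ?_⟩
  by_contra hne'
  obtain ⟨M, hM, hSM⟩ := exists_subset_maximal G₀ hG (genIdealIdeal {a}) hne'
  have hMF₁ : M ∈ F₁ := hF₁all M hM
    (fun h => hM.1 (Set.eq_univ_of_univ_subset (hsquniv ▸ h)))
  have haM : a ∈ M.carrier := hSM (subset_genIdeal (Set.mem_singleton a))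
  exact crtsum_not_mem (Finset.nodup_toList F₁) (Finset.mem_toList.mpr hMF₁) xf
    (hx3 M hMF₁)
    (fun M' hM' hne => hx2 M' (Finset.mem_toList.mp hM') M hMF₁ hne.symm) haM

theorem hard_case
    (hA : ¬Subsingleton A)
    (G₀ : Finset A) (hG : genIdeal (G₀ : Set A) = Set.univ)
    (hdcc : ∀ f : ℕ → Ideal A, (∀ n, (f n).carrier ⊆ sq A) →
      (∀ n, (f (n + 1)).carrier ⊆ (f n).carrier) →
      ∃ N, ∀ n, N ≤ n → (f n).carrier = (f N).carrier)
    (f : BraceHom A B) (hf : Function.Surjective f.toFun) (hker : f.ker = sq A)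
    (T : Finset B) (hT : genIdeal (T : Set B) = Set.univ) (hTne : T.Nonempty) :
    ∃ S : Finset A, S.card ≤ T.card ∧ genIdeal (S : Set A) = Set.univ := by
  classical
  obtain ⟨F₁, hF₁, hF₁all⟩ := exists_F1 hdcc
  have hf' := hf
  choose lift hlift using hf'
  obtain ⟨t₀, ht₀⟩ := hTne
  have hnA : Nonempty A := ⟨0⟩
  have hxex : ∀ M ∈ F₁, ∃ x, x ∈ sq A ∧ (∀ M' ∈ F₁, M' ≠ M → x ∈ M'.carrier) ∧
      x ∉ M.carrier :=
    fun M hM => crt_spec (hF₁ M hM).1 (hF₁ M hM).2 F₁ (fun I hI => (hF₁ I hI).1)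
  choose! xf hx1 hx2 hx3 using hxex
  set bad : Finset (Ideal A) := F₁.filter (fun M => ∀ t ∈ T, lift t ∈ M.carrier)
    with hbaddef
  set ε : A := ((bad.toList).map xf).sum with hεdef
  have hεsq : ε ∈ sq A :=
    crtsum_mem (I := sqIdeal A) xf
      (fun M' hM' => hx1 M' (Finset.mem_of_mem_filter M' (Finset.mem_toList.mp hM')))
  have hεgood : ∀ M ∈ F₁, M ∉ bad → ε ∈ M.carrier := by
    intro M hM hMbad
    apply crtsum_mem (I := M) xf
    intro M' hM'
    have hM'bad : M' ∈ bad := Finset.mem_toList.mp hM'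
    exact hx2 M' (Finset.mem_of_mem_filter M' hM'bad) M hM (fun h => hMbad (h ▸ hM'bad))
  have hεbad : ∀ M ∈ bad, ε ∉ M.carrier := by
    intro M hM
    apply crtsum_not_mem (Finset.nodup_toList bad) (Finset.mem_toList.mpr hM) xf
      (hx3 M (Finset.mem_of_mem_filter M hM))
    intro M' hM' hne'
    exact hx2 M' (Finset.mem_of_mem_filter M' (Finset.mem_toList.mp hM')) M
      (Finset.mem_of_mem_filter M hM) hne'.symm
  have hfε : f.toFun ε = 0 := by
    have h2 : ε ∈ f.ker := by rw [hker]; exact hεsq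
    exact h2
  set g : B → A := fun t => if t = t₀ then lift t₀ + ε else lift t with hgdef
  have hgt₀eq : g t₀ = lift t₀ + ε := by rw [hgdef]; simp
  have hgteq : ∀ t, t ≠ t₀ → g t = lift t := by
    intro t ht; rw [hgdef]; simp [ht]
  have hfg : ∀ t, f.toFun (g t) = t := by
    intro t
    by_cases h : t = t₀
    · subst h; rw [hgt₀eq, f.map_add', hfε, hlift, add_zero]
    · rw [hgteq t h, hlift]
  refine ⟨T.image g, Finset.card_image_le, ?_⟩
  by_contra hne'
  obtain ⟨M, hM, hSM⟩ := exists_subset_maximal G₀ hG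
    (genIdealIdeal ((T.image g : Finset A) : Set A)) hne'
  have hSM' : ((T.image g : Finset A) : Set A) ⊆ M.carrier :=
    subset_genIdeal.trans hSM
  by_cases hsqM : sq A ⊆ M.carrier
  · have hTsub : (T : Set B) ⊆ (f.mapIdeal hf M).carrier := by
      intro t ht
      exact ⟨g t,
        hSM' (Finset.mem_coe.mpr (Finset.mem_image_of_mem g (Finset.mem_coe.mp ht))),
        hfg t⟩
    have hJuniv : (f.mapIdeal hf M).carrier = Set.univ := by
      have h3 := genIdeal_subset hTsub
      rw [hT] at h3
      exact Set.eq_univ_of_univ_subset h3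
    have hMuniv : M.carrier = Set.univ := by
      rw [Set.eq_univ_iff_forall]
      intro a
      obtain ⟨m, hm, hfm⟩ : f.toFun a ∈ (f.mapIdeal hf M).carrier :=
        hJuniv ▸ Set.mem_univ _
      have hk : m⁻¹ * a ∈ f.ker := by
        show f.toFun (m⁻¹ * a) = 0
        rw [f.map_mul', f.map_inv, hfm, inv_mul_cancel, one_eq_zero']
      have hk' : m⁻¹ * a ∈ M.carrier := hsqM (hker ▸ hk)
      have h4 : a = m * (m⁻¹ * a) := by group
      rw [h4]
      exact M.mul_mem hm hk'
    exact hM.1 hMuniv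
  · have hMF₁ : M ∈ F₁ := hF₁all M hM hsqM
    have hgt₀ : g t₀ ∈ M.carrier :=
      hSM' (Finset.mem_coe.mpr (Finset.mem_image_of_mem g ht₀))
    by_cases hMbad : M ∈ bad
    · have hl : lift t₀ ∈ M.carrier := (Finset.mem_filter.mp hMbad).2 t₀ ht₀
      have hεM : ε ∈ M.carrier := by
        have h5 := M.add_mem (M.neg_mem hl) (hgt₀eq ▸ hgt₀)
        rwa [neg_add_cancel_left] at h5
      exact hεbad M hMbad hεM
    · have hεM : ε ∈ M.carrier := hεgood M hMF₁ hMbad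
      have h6 : ¬ ∀ t ∈ T, lift t ∈ M.carrier := by
        intro hall
        exact hMbad (Finset.mem_filter.mpr ⟨hMF₁, hall⟩)
      push_neg at h6
      obtain ⟨t, ht, hlt⟩ := h6
      by_cases h : t = t₀
      · subst h
        apply hlt
        have h7 := M.add_mem (hgt₀eq ▸ hgt₀) (M.neg_mem hεM)
        rwa [add_assoc, add_neg_cancel, add_zero] at h7
      · apply hlt
        have h8 : g t ∈ M.carrier :=
          hSM' (Finset.mem_coe.mpr (Finset.mem_image_of_mem g ht))
        rwa [hgteq t h] at h8

end SkewBrace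


open SkewBrace in
/-- Kutzko analog: if `A` has finite weight and the ideals of `A`
contained in `A⁽²⁾` satisfy the descending chain condition, then
`ω(A) = ω(A/A⁽²⁾)` (the quotient is presented as a surjective brace
homomorphism with kernel `A⁽²⁾`). -/
theorem weight_eq_weight_mod_sq (A B : Type*) [SkewBrace A] [SkewBrace B]
    (hw : weight A ≠ ⊤)
    (hdcc : ∀ f : ℕ → Ideal A, (∀ n, (f n).carrier ⊆ sq A) →
      (∀ n, (f (n + 1)).carrier ⊆ (f n).carrier) →
      ∃ N, ∀ n, N ≤ n → (f n).carrier = (f N).carrier)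
    (f : BraceHom A B) (hf : Function.Surjective f.toFun) (hker : f.ker = sq A) :
    weight A = weight B := by
  classical
  by_cases hA : Subsingleton A
  · have hB := subsingleton_target hf hA
    rw [weight_subsingleton hA, weight_subsingleton hB]
  · obtain ⟨G₀, hG⟩ := exists_gen_of_ne_top hA hw
    by_cases hB : Subsingleton B
    · rw [weight_subsingleton hB]
      have hsquniv : sq A = Set.univ := by
        rw [← hker, Set.eq_univ_iff_forall]
        intro a
        show f.toFun a = 0
        exact @Subsingleton.elim B hB _ _
      obtain ⟨a, ha⟩ := hard_case0 G₀ hG hdcc hsquniv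
      have hle : weight A ≤ 1 := by
        have h1 := weight_le_of_gen hA {a} (by simpa using ha)
        simpa using h1
      have hge : (1:ℕ∞) ≤ weight A := by
        rw [weight_eq_iInf hA]
        refine le_iInf₂ fun S hS => ?_
        rcases Finset.eq_empty_or_nonempty S with rfl | hSne
        · exact absurd (subsingleton_of_gen_empty (by simpa using hS)) hA
        · exact_mod_cast Nat.one_le_iff_ne_zero.mpr
            (Finset.card_ne_zero_of_mem hSne.choose_spec)
      exact le_antisymm hle hge
    · refine le_antisymm ?_ ?_
      · rw [weight_eq_iInf hB]
        refine le_iInf₂ fun T hT => ?_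
        have hTne : T.Nonempty := by
          rcases Finset.eq_empty_or_nonempty T with rfl | h
          · exact absurd (subsingleton_of_gen_empty (by simpa using hT)) hB
          · exact h
        obtain ⟨S, hcard, hSgen⟩ := hard_case hA G₀ hG hdcc f hf hker T hT hTne
        exact (weight_le_of_gen hA S hSgen).trans (Nat.cast_le.mpr hcard)
      · rw [weight_eq_iInf hA]
        refine le_iInf₂ fun S hS => ?_
        have h1 := gen_image hf (S := (S : Set A)) hS
        have h2 : genIdeal ((S.image f.toFun : Finset B) : Set B) = Set.univ := by
          rwa [Finset.coe_image]
        exact (weight_le_of_gen hB _ h2).trans (Nat.cast_le.mpr Finset.card_image_le)
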